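/- Let Φ be one of 𝒪, Γ and let X be a normal topological space. The following are equivalent, where 0̄ denotes the constant zero function on X: (a) C*_p(X) satisfies the selection principle S₁(Φ̃↑, 𝒫); (b) X possesses the covering property S₁(Φ^sh,𝒪); (c) C*_p(X) satisfies S₁(Φ_0̄,𝒪_0̄); (d) C*_p(X) satisfies S₁(Φ̃↑,𝒪_0̄). If X possesses property (ε), the equivalences hold also for Φ = Ω. -/

import Mathlib

/-!
A shrinkable Φ-cover `𝒰` is encoded by the bounded continuous functions that are at least `1`
in absolute value off some member of `𝒰`. Urysohn's lemma on the shrunk sets makes this family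
Φ̃↑-dense, and functions chosen so that their values come close to `0` at every point pick out a
cover: (d) gives (b). Conversely, a family in Φ_0̄ yields the shrinkable Φ-cover by the sublevel
sets `{f < ε}`, shrunk by `{f < ε/2}`; selecting covers for `ε = 1/(k+1)` gives (c). Finally,
subtracting a constant `q` turns a Φ̃↑-dense family into a member of Φ_0̄, so (c) gives selections
approaching every rational value at every point, which is (a). Countably many such requirements
are met by a single selection by splitting `ℕ` along `Nat.pair`.
-/

open Set Filter Topology

namespace Selectors

variable {X : Type*}

/-- Kinds of covers / of pointwise properties: `o` (ordinary covers / 𝒪),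
`omega` (ω-covers / Ω), `gamma` (γ-covers / Γ). -/
inductive CoverKind : Type
  | o | omega | gamma

/-- `f` is a bounded upper semicontinuous real function on `X`. -/
def IsUSCb [TopologicalSpace X] (f : X → ℝ) : Prop :=
  (∀ a : ℝ, IsOpen {x | f x < a}) ∧ ∃ M : ℝ, ∀ x, |f x| ≤ M

/-- `USC*_p(X)`: the set of bounded upper semicontinuous real functions on `X`,
regarded as a subset of `X → ℝ` with the product (pointwise convergence) topology. -/
def USCb (X : Type*) [TopologicalSpace X] : Set (X → ℝ) := {f | IsUSCb f}

/-- `C*_p(X)`: the set of bounded continuous real functions on `X`. -/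
def Cb (X : Type*) [TopologicalSpace X] : Set (X → ℝ) :=
  {f | Continuous f ∧ ∃ M : ℝ, ∀ x, |f x| ≤ M}

/-- `𝒰` is a cover of `X`. -/
def IsCover (𝒰 : Set (Set X)) : Prop := ∀ x : X, ∃ U ∈ 𝒰, x ∈ U

/-- The (not necessarily open) cover condition of the given kind:
an `o`-cover is a cover; an ω-cover is a cover not containing `X` such that every
finite subset of `X` is contained in a member; a γ-cover is an infinite cover such
that each point belongs to all but finitely many members. -/
def kindSets (k : CoverKind) (𝒰 : Set (Set X)) : Prop :=
  match k with
  | .o => IsCover 𝒰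
  | .omega => IsCover 𝒰 ∧ Set.univ ∉ 𝒰 ∧ ∀ F : Set X, F.Finite → ∃ U ∈ 𝒰, F ⊆ U
  | .gamma => IsCover 𝒰 ∧ 𝒰.Infinite ∧ ∀ x : X, {U ∈ 𝒰 | x ∉ U}.Finite

/-- The family `𝒪(X)`, `Ω(X)` or `Γ(X)` of open covers/ω-covers/γ-covers of `X`. -/
def OpenKindCovers (X : Type*) [TopologicalSpace X] (k : CoverKind) : Set (Set (Set X)) :=
  {𝒰 | (∀ U ∈ 𝒰, IsOpen U) ∧ kindSets k 𝒰}

/-- The selection principle `S₁(A, B)`. -/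
def S1 {α : Type*} (A B : Set (Set α)) : Prop :=
  ∀ u : ℕ → Set α, (∀ n, u n ∈ A) →
    ∃ sel : ℕ → α, (∀ n, sel n ∈ u n) ∧ Set.range sel ∈ B

/-- The selection principle `S_fin(A, B)`. -/
def Sfin {α : Type*} (A B : Set (Set α)) : Prop :=
  ∀ u : ℕ → Set α, (∀ n, u n ∈ A) →
    ∃ V : ℕ → Set α, (∀ n, V n ⊆ u n ∧ (V n).Finite) ∧ (⋃ n, V n) ∈ B

/-- Property `(𝒪_h)` of a family `F` of real functions. -/
def PropO (h : X → ℝ) (F : Set (X → ℝ)) : Prop :=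
  ∀ x : X, h x ∈ closure ((fun f : X → ℝ => f x) '' F)

/-- Property `(Ω_h)`: `h ∉ F` and `h` belongs to the closure of `F` in `ℝ^X`. -/
def PropOmega (h : X → ℝ) (F : Set (X → ℝ)) : Prop :=
  h ∉ F ∧ h ∈ closure F

/-- Property `(Γ_h)`. -/
def PropGamma (h : X → ℝ) (F : Set (X → ℝ)) : Prop :=
  F.Infinite ∧ ∀ ε : ℝ, 0 < ε → ∀ x : X, {f ∈ F | ε ≤ |f x - h x|}.Finite

/-- Property `(Φ_h)` for `Φ = 𝒪, Ω, Γ`. -/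
def kindProp (k : CoverKind) (h : X → ℝ) (F : Set (X → ℝ)) : Prop :=
  match k with
  | .o => PropO h F
  | .omega => PropOmega h F
  | .gamma => PropGamma h F

/-- The family `Φ_h(H) = {F ⊆ H : F has (Φ_h) and ∀ f ∈ F, f ≥ h ∧ f - h ∈ H}`. -/
def PhiH (k : CoverKind) (h : X → ℝ) (H : Set (X → ℝ)) : Set (Set (X → ℝ)) :=
  {F | F ⊆ H ∧ kindProp k h F ∧ ∀ f ∈ F, h ≤ f ∧ f - h ∈ H}

/-- `F ⊆ H` is sequentially dense in `H` (with respect to pointwise convergence). -/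
def SeqDenseIn (F H : Set (X → ℝ)) : Prop :=
  F ⊆ H ∧ ∀ f ∈ H, ∃ u : ℕ → (X → ℝ), (∀ n, u n ∈ F) ∧
    Filter.Tendsto u Filter.atTop (nhds f)

/-- `F ⊆ H` is dense in `H`. -/
def DenseIn (F H : Set (X → ℝ)) : Prop :=
  F ⊆ H ∧ H ⊆ closure F

/-- `F` is pointwise dense: `{f x : f ∈ F}` is dense in `ℝ` for every `x`. -/
def PointwiseDense (F : Set (X → ℝ)) : Prop :=
  ∀ x : X, Dense {y : ℝ | ∃ f ∈ F, f x = y}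

/-- `F ⊆ H` is upper sequentially dense in `H`. -/
def UpperSeqDenseIn (F H : Set (X → ℝ)) : Prop :=
  F ⊆ H ∧ ∀ f ∈ H, ∃ u : ℕ → (X → ℝ),
    (∀ n, u n ∈ F ∧ f ≤ u n ∧ u n - f ∈ H) ∧
    Filter.Tendsto u Filter.atTop (nhds f)

/-- `F ⊆ H` is upper dense in `H`: for every `f ∈ H` the set
`{h ∈ F : h ≥ f ∧ h - f ∈ H}` is dense in `{h ∈ H : h ≥ f}`. -/
def UpperDenseIn (F H : Set (X → ℝ)) : Prop :=
  F ⊆ H ∧ ∀ f ∈ H, {g | g ∈ H ∧ f ≤ g} ⊆ closure {g | g ∈ F ∧ f ≤ g ∧ g - f ∈ H}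

/-- `𝒮(H)`: the family of sequentially dense subsets of `H`. -/
def Sfam (H : Set (X → ℝ)) : Set (Set (X → ℝ)) := {F | SeqDenseIn F H}

/-- `𝒟(H)`: the family of dense subsets of `H`. -/
def Dfam (H : Set (X → ℝ)) : Set (Set (X → ℝ)) := {F | DenseIn F H}

/-- `𝒫(H)`: the family of pointwise dense subsets of `H`. -/
def Pfam (H : Set (X → ℝ)) : Set (Set (X → ℝ)) := {F | F ⊆ H ∧ PointwiseDense F}

/-- `Φ̃↑(H)`: for `Φ = Γ` the upper sequentially dense subsets, for `Φ = Ω`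
the upper dense subsets, for `Φ = 𝒪` the pointwise dense subsets of `H`. -/
def upTilde (k : CoverKind) (H : Set (X → ℝ)) : Set (Set (X → ℝ)) :=
  match k with
  | .o => Pfam H
  | .omega => {F | UpperDenseIn F H}
  | .gamma => {F | UpperSeqDenseIn F H}

/-- `H` is separable: it has a countable dense subset. -/
def SeparableSet (H : Set (X → ℝ)) : Prop := ∃ D, D.Countable ∧ DenseIn D H

/-- `H` is sequentially separable: it has a countable sequentially dense subset. -/
def SeqSeparableSet (H : Set (X → ℝ)) : Prop := ∃ D, D.Countable ∧ SeqDenseIn D H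

/-- Property `(ε)`: every open ω-cover contains a countable ω-subcover. -/
def PropEps (X : Type*) [TopologicalSpace X] : Prop :=
  ∀ 𝒰 : Set (Set X), 𝒰 ∈ OpenKindCovers X CoverKind.omega →
    ∃ 𝒱 ⊆ 𝒰, 𝒱.Countable ∧ 𝒱 ∈ OpenKindCovers X CoverKind.omega

/-- `S` is an `F_σ` set with respect to the topology `t`. -/
def IsFsigmaIn (t : TopologicalSpace X) (S : Set X) : Prop :=
  ∃ C : ℕ → Set X, (∀ n, IsClosed[t] (C n)) ∧ S = ⋃ n, C n

/-- `S` is locally closed with respect to `t`: an intersection of a `t`-open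
and a `t`-closed set. -/
def IsLocallyClosedIn (t : TopologicalSpace X) (S : Set X) : Prop :=
  ∃ U F : Set X, IsOpen[t] U ∧ IsClosed[t] F ∧ S = U ∩ F

/-- `S` is a cozero set with respect to `t`. -/
def IsCozeroIn (t : TopologicalSpace X) (S : Set X) : Prop :=
  ∃ f : X → ℝ, @Continuous X ℝ t inferInstance f ∧ S = {x | f x ≠ 0}

/-- The `OB`-property of `⟨X, t⟩`: there is a separable metrizable topology `t'`
on `X` weaker than `t` such that every locally closed subset of `⟨X, t⟩` is an
`F_σ`-set in `t'`. -/
def OBProperty (X : Type*) [t : TopologicalSpace X] : Prop :=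
  ∃ t' : TopologicalSpace X,
    (∀ s : Set X, IsOpen[t'] s → IsOpen[t] s) ∧
    @TopologicalSpace.MetrizableSpace X t' ∧
    @TopologicalSpace.SeparableSpace X t' ∧
    ∀ S : Set X, IsLocallyClosedIn t S → IsFsigmaIn t' S

/-- The `V`-property of `⟨X, t⟩`: there is a separable metrizable topology `t'`
on `X` weaker than `t` such that every cozero subset of `⟨X, t⟩` is an
`F_σ`-set in `t'`. -/
def VProperty (X : Type*) [t : TopologicalSpace X] : Prop :=
  ∃ t' : TopologicalSpace X,
    (∀ s : Set X, IsOpen[t'] s → IsOpen[t] s) ∧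
    @TopologicalSpace.MetrizableSpace X t' ∧
    @TopologicalSpace.SeparableSpace X t' ∧
    ∀ S : Set X, IsCozeroIn t S → IsFsigmaIn t' S

/-- `iw(X) = ℵ₀`: `X` can be mapped by a one-to-one continuous map onto a
Tychonoff space of countable weight. -/
def IWCountable (X : Type*) [TopologicalSpace X] : Prop :=
  ∃ (Y : Type) (tY : TopologicalSpace Y) (f : X → Y),
    @Continuous X Y _ tY f ∧ Function.Bijective f ∧
    @T35Space Y tY ∧ @SecondCountableTopology Y tY

/-- `Φ^sh(X)`: the family of open shrinkable φ-covers of `X`. -/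
def ShFam (X : Type*) [TopologicalSpace X] (k : CoverKind) : Set (Set (Set X)) :=
  {𝒰 | 𝒰 ∈ OpenKindCovers X k ∧
    ∃ 𝒲 ∈ OpenKindCovers X k, ∀ W ∈ 𝒲, ∃ U ∈ 𝒰, closure W ⊆ U}

/-- A zero set. -/
def IsZeroSet [TopologicalSpace X] (S : Set X) : Prop :=
  ∃ f : X → ℝ, Continuous f ∧ S = {x | f x = 0}

/-- A cozero set. -/
def IsCozeroSet [TopologicalSpace X] (S : Set X) : Prop :=
  ∃ f : X → ℝ, Continuous f ∧ S = {x | f x ≠ 0}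

/-- `Φ^fsh_cz(X)`: the family of functionally shrinkable φ-covers of `X`
consisting of cozero sets. -/
def FshCzFam (X : Type*) [TopologicalSpace X] (k : CoverKind) : Set (Set (Set X)) :=
  {𝒰 | (∀ U ∈ 𝒰, IsCozeroSet U) ∧ kindSets k 𝒰 ∧
    ∃ 𝒲 : Set (Set X), (∀ W ∈ 𝒲, IsZeroSet W) ∧ kindSets k 𝒲 ∧
      ∀ W ∈ 𝒲, ∃ U ∈ 𝒰, closure W ⊆ U}

/-- The function `f_{U,g}`: equal to `0` on `U` and to `1 + sup |g|` off `U`. -/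
noncomputable def fU (U : Set X) (g : X → ℝ) : X → ℝ :=
  Uᶜ.indicator fun _ => 1 + ⨆ y, |g y|

/-- The family `S(𝒰) = {f_{U,g} + g : U ∈ 𝒰, g ∈ USC*_p(X)}`. -/
def SU [TopologicalSpace X] (𝒰 : Set (Set X)) : Set (X → ℝ) :=
  {f | ∃ U ∈ 𝒰, ∃ g ∈ USCb X, f = fU U g + g}

/-- The Sorgenfrey topology on `ℝ`, generated by the half-open intervals `[a, b)`. -/
def sorgenfreyTop : TopologicalSpace ℝ :=
  TopologicalSpace.generateFrom {s | ∃ a b : ℝ, s = Set.Ico a b}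

/-- The Sorgenfrey plane topology on `ℝ × ℝ`. -/
def sorgenfreyPlaneTop : TopologicalSpace (ℝ × ℝ) :=
  @instTopologicalSpaceProd ℝ ℝ sorgenfreyTop sorgenfreyTop

theorem S1.mono {α : Type*} {A B B' : Set (Set α)} (h : S1 A B) (hB : B ⊆ B') : S1 A B' :=
  fun u hu => let ⟨s, hs, hsB⟩ := h u hu; ⟨s, hs, hB hsB⟩

theorem S1_iInter {α ι : Type*} [Countable ι] [Nonempty ι] {A : Set (Set α)}
    {B : ι → Set (Set α)} (hB : ∀ i, ∀ ⦃G G'⦄, G ∈ B i → G ⊆ G' → G' ∈ B i)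
    (h : ∀ i, S1 A (B i)) : S1 A (⋂ i, B i) := by
  intro u hu
  obtain ⟨e, he⟩ := exists_surjective_nat ι
  choose s hs hsB using fun j => h (e j) (fun m => u (Nat.pair j m)) fun m => hu _
  refine ⟨fun n => s n.unpair.1 n.unpair.2, fun n => by simpa using hs n.unpair.1 n.unpair.2,
    mem_iInter.2 fun i => ?_⟩
  obtain ⟨j, rfl⟩ := he i
  refine hB _ (hsB j) (range_subset_iff.2 fun m => ⟨Nat.pair j m, ?_⟩)
  simp

theorem propO_iff {h : X → ℝ} {F : Set (X → ℝ)} :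
    PropO h F ↔ ∀ x, ∀ ε > 0, ∃ f ∈ F, |f x - h x| < ε := by
  simp only [PropO, Real.mem_closure_iff, exists_mem_image]

theorem PropO.mono {h : X → ℝ} {F G : Set (X → ℝ)} (hF : PropO h F) (hFG : F ⊆ G) :
    PropO h G :=
  fun x => closure_mono (image_mono hFG) (hF x)

theorem PointwiseDense.propO {F : Set (X → ℝ)} (hF : PointwiseDense F) (h : X → ℝ) :
    PropO h F :=
  fun x => (hF x).closure_eq ▸ mem_univ (h x)

theorem pointwiseDense_of_forall_propO_rat {F : Set (X → ℝ)}
    (hF : ∀ q : ℚ, PropO (fun _ => (q : ℝ)) F) : PointwiseDense F :=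
  fun x => dense_closure.1 (Rat.denseRange_cast.mono (range_subset_iff.2 fun q => hF q x))

/-- The sequence has infinite range because its limit `h` is not in it, and a finite set of
functions is closed in `ℝ^X`. -/
theorem kindProp_range_of_tendsto (Φ : CoverKind) {h : X → ℝ} {v : ℕ → X → ℝ}
    (hv : Tendsto v atTop (𝓝 h)) (hne : ∀ n, v n ≠ h) : kindProp Φ h (range v) := by
  have hrange : ∀ᶠ n in atTop, v n ∈ range v := Eventually.of_forall mem_range_self
  cases Φ with
  | o =>
    exact fun x => mem_closure_of_tendsto ((continuous_apply x).tendsto h |>.comp hv)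
      (Eventually.of_forall fun n => mem_image_of_mem _ (mem_range_self n))
  | omega => exact ⟨fun ⟨n, hn⟩ => hne n hn, mem_closure_of_tendsto hv hrange⟩
  | gamma =>
    refine ⟨fun hfin => ?_, fun ε hε x => ?_⟩
    · obtain ⟨n, hn⟩ := hfin.isClosed.mem_of_tendsto hv hrange
      exact hne n hn
    · have hclose : ∀ᶠ n in cofinite, |v n x - h x| < ε := by
        rw [Nat.cofinite_eq_atTop]
        exact (tendsto_pi_nhds.1 hv x).eventually (Metric.ball_mem_nhds _ hε)
      refine ((eventually_cofinite.1 hclose).image v).subset ?_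
      rintro _ ⟨⟨n, rfl⟩, hn⟩
      exact ⟨n, not_lt.2 hn, rfl⟩

theorem mem_closure_of_forall_finite_eqOn {S : Set (X → ℝ)} {f : X → ℝ}
    (h : ∀ I : Set X, I.Finite → ∃ g ∈ S, EqOn g f I) : f ∈ closure S := by
  refine mem_closure_iff_nhds.2 fun N hN => ?_
  rw [nhds_pi] at hN
  obtain ⟨I, hI, t, ht, hIt⟩ := Filter.mem_pi.1 hN
  obtain ⟨g, hgS, hgf⟩ := h I hI
  exact ⟨g, hIt fun x hx => hgf hx ▸ mem_of_mem_nhds (ht x), hgS⟩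

theorem upTilde_subset {Φ : CoverKind} {H T : Set (X → ℝ)} (hT : T ∈ upTilde Φ H) : T ⊆ H := by
  cases Φ <;> exact hT.1

def Dominates (F T : Set (X → ℝ)) (c : X → ℝ) : Prop :=
  ∀ g ∈ F, ∃ f ∈ T, ∀ x, |f x - c x| ≤ |g x|

theorem S1_propO_of_dominates {A A' : Set (Set (X → ℝ))} {c : X → ℝ}
    (h : S1 A' {G | PropO 0 G}) (hdom : ∀ T ∈ A, ∃ F ∈ A', Dominates F T c) :
    S1 A {G | PropO c G} := by
  intro u hu
  choose F hF hFdom using fun n => hdom (u n) (hu n)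
  obtain ⟨g, hg, hg0⟩ := h F hF
  choose f hf hfg using fun n => hFdom n (g n) (hg n)
  refine ⟨f, hf, propO_iff.2 fun x ε hε => ?_⟩
  obtain ⟨_, ⟨n, rfl⟩, hn⟩ := propO_iff.1 hg0 x ε hε
  exact ⟨f n, mem_range_self n, (hfg n x).trans_lt (by simpa using hn)⟩

def sublevels (ε : ℝ) (F : Set (X → ℝ)) : Set (Set X) :=
  (fun f => {x | f x < ε}) '' F

theorem kindSets_gamma_sublevels {F : Set (X → ℝ)} (hF : PropGamma 0 F) {ε : ℝ} (hε : 0 < ε)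
    (hbig : ∀ f ∈ F, ∃ x, ε ≤ f x) : kindSets .gamma (sublevels ε F) := by
  obtain ⟨hinf, hcof⟩ := hF
  have hlarge : ∀ x, {f ∈ F | ¬ f x < ε}.Finite := fun x => (hcof ε hε x).subset
    fun f ⟨hf, hfx⟩ => ⟨hf, by simpa using (not_lt.1 hfx).trans (le_abs_self _)⟩
  refine ⟨fun x => ?_, fun hfin => ?_, fun x => ?_⟩
  · obtain ⟨f, hf, hfx⟩ := (hinf.sdiff (hlarge x)).nonempty
    exact ⟨_, mem_image_of_mem _ hf, not_not.1 fun h => hfx ⟨hf, h⟩⟩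
  · -- a point `pt U ∉ U` for each of finitely many sublevel sets `U` puts `F` in finitely many
    -- of the finite sets `{f ∈ F | ¬ f (pt U) < ε}`
    have hproper : ∀ U ∈ sublevels ε F, ∃ x, x ∉ U := by
      rintro _ ⟨f, hf, rfl⟩
      simpa using hbig f hf
    have : Nonempty X := let ⟨f, hf⟩ := hinf.nonempty; ⟨(hbig f hf).choose⟩
    choose! pt hpt using hproper
    refine hinf ((hfin.biUnion fun U _ => hlarge (pt U)).subset fun f hf => ?_)
    exact mem_biUnion (mem_image_of_mem _ hf) ⟨hf, hpt _ (mem_image_of_mem _ hf)⟩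
  · refine ((hlarge x).image fun f => {x | f x < ε}).subset ?_
    rintro _ ⟨⟨f, hf, rfl⟩, hx⟩
    exact ⟨f, ⟨hf, hx⟩, rfl⟩

theorem kindSets_sublevels {Φ : CoverKind} {F : Set (X → ℝ)} (hF : kindProp Φ 0 F) {ε : ℝ}
    (hε : 0 < ε) (hbig : ∀ f ∈ F, ∃ x, ε ≤ f x) : kindSets Φ (sublevels ε F) := by
  cases Φ with
  | o =>
    intro x
    obtain ⟨f, hf, hfx⟩ := propO_iff.1 hF x ε hε
    exact ⟨_, mem_image_of_mem _ hf, (le_abs_self _).trans_lt (by simpa using hfx)⟩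
  | omega =>
    have hfin : ∀ I : Set X, I.Finite → ∃ U ∈ sublevels ε F, I ⊆ U := fun I hI => by
      obtain ⟨f, hf, hfF⟩ := mem_closure_iff_nhds.1 hF.2 _
        (set_pi_mem_nhds hI fun _ _ => Iio_mem_nhds hε)
      exact ⟨_, mem_image_of_mem _ hfF, hf⟩
    refine ⟨fun x => ?_, fun ⟨f, hf, huniv⟩ => ?_, hfin⟩
    · obtain ⟨U, hU, hxU⟩ := hfin {x} (finite_singleton x)
      exact ⟨U, hU, hxU rfl⟩
    · obtain ⟨x, hx⟩ := hbig f hf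
      exact hx.not_gt (eq_univ_iff_forall.1 huniv x)
  | gamma => exact kindSets_gamma_sublevels hF hε hbig

section Topology

open scoped BoundedContinuousFunction

variable [TopologicalSpace X]

theorem mem_Cb_iff {f : X → ℝ} : f ∈ Cb X ↔ ∃ g : X →ᵇ ℝ, ⇑g = f :=
  ⟨fun ⟨hf, M, hM⟩ => ⟨.ofNormedAddCommGroup f hf M hM, rfl⟩,
    fun ⟨g, hg⟩ => hg ▸ ⟨g.continuous, ‖g‖, g.norm_coe_le_norm⟩⟩

theorem coe_mem_Cb (g : X →ᵇ ℝ) : ⇑g ∈ Cb X := mem_Cb_iff.2 ⟨g, rfl⟩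

theorem const_mem_Cb (c : ℝ) : (fun _ => c) ∈ Cb X := coe_mem_Cb (.const X c)

theorem sub_mem_Cb {f g : X → ℝ} (hf : f ∈ Cb X) (hg : g ∈ Cb X) : f - g ∈ Cb X := by
  obtain ⟨f, rfl⟩ := mem_Cb_iff.1 hf
  obtain ⟨g, rfl⟩ := mem_Cb_iff.1 hg
  exact coe_mem_Cb (f - g)

theorem abs_sub_mem_Cb {f g : X → ℝ} (hf : f ∈ Cb X) (hg : g ∈ Cb X) :
    (fun x => |f x - g x|) ∈ Cb X := by
  obtain ⟨h, hh⟩ := mem_Cb_iff.1 (sub_mem_Cb hf hg)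
  exact mem_Cb_iff.2 ⟨|h|, by rw [BoundedContinuousFunction.coe_abs, hh]; rfl⟩

theorem PhiH_nonempty [Nonempty X] (Φ : CoverKind) : (PhiH Φ (0 : X → ℝ) (Cb X)).Nonempty := by
  have hv : Tendsto (fun (n : ℕ) (_ : X) => 1 / ((n : ℝ) + 1)) atTop (𝓝 0) :=
    tendsto_pi_nhds.2 fun _ => tendsto_one_div_add_atTop_nhds_zero_nat
  refine ⟨_, range_subset_iff.2 fun n => const_mem_Cb _,
    kindProp_range_of_tendsto Φ hv fun n h => ?_, forall_mem_range.2 fun n => ?_⟩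
  · exact Nat.one_div_pos_of_nat.ne' (congrFun h (Classical.arbitrary X))
  · exact ⟨fun _ => Nat.one_div_pos_of_nat.le, by simpa using const_mem_Cb _⟩

theorem nonempty_of_mem_PhiH [Nonempty X] {Φ : CoverKind} {F : Set (X → ℝ)}
    (hF : F ∈ PhiH Φ 0 (Cb X)) : F.Nonempty := by
  cases Φ with
  | o =>
    obtain ⟨f, hf, -⟩ := propO_iff.1 hF.2.1 (Classical.arbitrary X) 1 one_pos
    exact ⟨f, hf⟩
  | omega => exact closure_nonempty_iff.1 ⟨0, hF.2.1.2⟩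
  | gamma => exact hF.2.1.1.nonempty

theorem dominates_of_pointwiseDense {T : Set (X → ℝ)} (hT : T ∈ Pfam (Cb X)) {c : X → ℝ}
    (hc : c ∈ Cb X) : ∃ F ∈ PhiH .o 0 (Cb X), Dominates F T c := by
  have hCb : ∀ f ∈ T, (fun x => |f x - c x|) ∈ Cb X := fun f hf => abs_sub_mem_Cb (hT.1 hf) hc
  refine ⟨(fun f x => |f x - c x|) '' T, ⟨?_, propO_iff.2 fun x ε hε => ?_, ?_⟩, ?_⟩
  · rintro _ ⟨f, hf, rfl⟩
    exact hCb f hf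
  · obtain ⟨_, hy, f, hf, rfl⟩ := Metric.dense_iff.1 (hT.2 x) (c x) ε hε
    exact ⟨_, mem_image_of_mem _ hf, by simpa [Real.dist_eq] using hy⟩
  · rintro _ ⟨f, hf, rfl⟩
    exact ⟨fun x => abs_nonneg _, by simpa using hCb f hf⟩
  · rintro _ ⟨f, hf, rfl⟩
    exact ⟨f, hf, fun x => (abs_abs _).ge⟩

theorem dominates_of_upperDenseIn {T : Set (X → ℝ)} (hT : UpperDenseIn T (Cb X)) {c : X → ℝ}
    (hc : c ∈ Cb X) (hcT : c ∉ T) : ∃ F ∈ PhiH .omega 0 (Cb X), Dominates F T c := by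
  set S := {g | g ∈ T ∧ c ≤ g ∧ g - c ∈ Cb X}
  refine ⟨(· - c) '' S, ⟨?_, ⟨?_, ?_⟩, ?_⟩, ?_⟩
  · rintro _ ⟨f, hf, rfl⟩
    exact hf.2.2
  · rintro ⟨f, hf, hf0⟩
    exact hcT (sub_eq_zero.1 hf0 ▸ hf.1)
  · have := mem_closure_image (continuous_sub_right c).continuousAt (hT.2 c hc ⟨hc, le_rfl⟩)
    rwa [sub_self] at this
  · rintro _ ⟨f, hf, rfl⟩
    exact ⟨sub_nonneg.2 hf.2.1, by simpa using hf.2.2⟩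
  · rintro _ ⟨f, hf, rfl⟩
    exact ⟨f, hf.1, fun x => le_rfl⟩

theorem dominates_of_upperSeqDenseIn {T : Set (X → ℝ)} (hT : UpperSeqDenseIn T (Cb X))
    {c : X → ℝ} (hc : c ∈ Cb X) (hcT : c ∉ T) :
    ∃ F ∈ PhiH .gamma 0 (Cb X), Dominates F T c := by
  obtain ⟨u, hu, hlim⟩ := hT.2 c hc
  refine ⟨range fun n => u n - c, ⟨range_subset_iff.2 fun n => (hu n).2.2,
    kindProp_range_of_tendsto .gamma (by simpa using hlim.sub_const c) fun n h => ?_,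
    forall_mem_range.2 fun n => ⟨sub_nonneg.2 (hu n).2.1, by simpa using (hu n).2.2⟩⟩, ?_⟩
  · exact hcT (sub_eq_zero.1 h ▸ (hu n).1)
  · rintro _ ⟨n, rfl⟩
    exact ⟨u n, (hu n).1, fun x => le_rfl⟩

theorem dominates_of_mem_upTilde [Nonempty X] {Φ : CoverKind} {T : Set (X → ℝ)}
    (hT : T ∈ upTilde Φ (Cb X)) {c : X → ℝ} (hc : c ∈ Cb X) :
    ∃ F ∈ PhiH Φ 0 (Cb X), Dominates F T c := by
  by_cases hcT : c ∈ T
  · obtain ⟨F, hF⟩ := PhiH_nonempty (X := X) Φ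
    exact ⟨F, hF, fun g _ => ⟨c, hcT, fun x => by simp⟩⟩
  cases Φ with
  | o => exact dominates_of_pointwiseDense hT hc
  | omega => exact dominates_of_upperDenseIn hT hc hcT
  | gamma => exact dominates_of_upperSeqDenseIn hT hc hcT

theorem S1_Pfam_of_S1_PhiH [Nonempty X] {Φ : CoverKind}
    (h : S1 (PhiH Φ 0 (Cb X)) (PhiH .o 0 (Cb X))) : S1 (upTilde Φ (Cb X)) (Pfam (Cb X)) := by
  have hrat : ∀ q : ℚ, S1 (upTilde Φ (Cb X)) {G | PropO (fun _ => (q : ℝ)) G} := fun q =>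
    S1_propO_of_dominates (h.mono fun G hG => hG.2.1)
      fun T hT => dominates_of_mem_upTilde hT (const_mem_Cb _)
  intro u hu
  obtain ⟨s, hs, hsq⟩ := S1_iInter
    (B := fun q : ℚ => {G | PropO (fun _ => (q : ℝ)) G}) (fun _ _ _ hG hGG' => PropO.mono hG hGG')
    hrat u hu
  exact ⟨s, hs, range_subset_iff.2 fun n => upTilde_subset (hu n) (hs n),
    pointwiseDense_of_forall_propO_rat (mem_iInter.1 hsq)⟩

theorem sublevels_mem_ShFam {Φ : CoverKind} {F : Set (X → ℝ)} (hF : F ∈ PhiH Φ 0 (Cb X))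
    {ε : ℝ} (hε : 0 < ε) (hbig : ∀ f ∈ F, ∃ x, ε ≤ f x) : sublevels ε F ∈ ShFam X Φ := by
  have hopen : ∀ δ, ∀ U ∈ sublevels δ F, IsOpen U := by
    rintro δ _ ⟨f, hf, rfl⟩
    exact isOpen_lt (hF.1 hf).1 continuous_const
  have hbig' : ∀ f ∈ F, ∃ x, ε / 2 ≤ f x := fun f hf =>
    (hbig f hf).imp fun x hx => by linarith
  refine ⟨⟨hopen ε, kindSets_sublevels hF.2.1 hε hbig⟩, sublevels (ε / 2) F,
    ⟨hopen _, kindSets_sublevels hF.2.1 (half_pos hε) hbig'⟩, ?_⟩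
  rintro _ ⟨f, hf, rfl⟩
  exact ⟨_, mem_image_of_mem _ hf, (closure_lt_subset_le (hF.1 hf).1 continuous_const).trans
    fun x hx => lt_of_le_of_lt hx (half_lt_self hε)⟩

theorem S1_PhiH_lt_of_S1_ShFam [Nonempty X] {Φ : CoverKind}
    (h : S1 (ShFam X Φ) (OpenKindCovers X .o)) {ε : ℝ} (hε : 0 < ε) :
    S1 (PhiH Φ 0 (Cb X)) {G | ∀ x, ∃ f ∈ G, f x < ε} := by
  intro F hF
  by_cases hsmall : ∃ m, ∃ f ∈ F m, ∀ x, f x < ε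
  · obtain ⟨m, f, hf, hfε⟩ := hsmall
    choose g hg using fun n => nonempty_of_mem_PhiH (hF n)
    refine ⟨Function.update g m f, fun n => ?_, fun x => ⟨f, ⟨m, by simp⟩, hfε x⟩⟩
    rcases eq_or_ne n m with rfl | hn
    · simpa using hf
    · simpa [hn] using hg n
  push Not at hsmall
  obtain ⟨U, hU, hcov⟩ := h _ fun n => sublevels_mem_ShFam (hF n) hε (hsmall n)
  choose f hf hfU using hU
  refine ⟨f, hf, fun x => ?_⟩
  obtain ⟨_, ⟨n, rfl⟩, hx⟩ := hcov.2 x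
  rw [← hfU n] at hx
  exact ⟨f n, mem_range_self n, hx⟩

theorem S1_PhiH_of_S1_ShFam [Nonempty X] {Φ : CoverKind}
    (h : S1 (ShFam X Φ) (OpenKindCovers X .o)) :
    S1 (PhiH Φ 0 (Cb X)) (PhiH .o 0 (Cb X)) := by
  intro F hF
  obtain ⟨s, hs, hsmall⟩ := S1_iInter
    (B := fun n : ℕ => {G | ∀ x, ∃ f ∈ G, f x < 1 / ((n : ℝ) + 1)})
    (fun _ _ _ hG hGG' x => (hG x).imp fun _ hf => ⟨hGG' hf.1, hf.2⟩)
    (fun _ => S1_PhiH_lt_of_S1_ShFam h Nat.one_div_pos_of_nat) F hF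
  have hnonneg : ∀ n, 0 ≤ s n ∧ s n - 0 ∈ Cb X := fun n => (hF n).2.2 _ (hs n)
  refine ⟨s, hs, ⟨range_subset_iff.2 fun n => (hF n).1 (hs n),
    propO_iff.2 fun x δ hδ => ?_, forall_mem_range.2 hnonneg⟩⟩
  obtain ⟨k, hk⟩ := exists_nat_one_div_lt hδ
  obtain ⟨_, ⟨n, rfl⟩, hn⟩ := mem_iInter.1 hsmall k x
  refine ⟨s n, mem_range_self n, ?_⟩
  rw [Pi.zero_apply, sub_zero, abs_of_nonneg ((hnonneg n).1 x)]
  exact hn.trans hk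

def coverFunctions (𝒰 : Set (Set X)) : Set (X → ℝ) :=
  {g | g ∈ Cb X ∧ ∃ U ∈ 𝒰, ∀ x ∉ U, 1 ≤ |g x|}

def ShrinksInto (𝒲 𝒰 : Set (Set X)) : Prop := ∀ W ∈ 𝒲, ∃ U ∈ 𝒰, closure W ⊆ U

/-- Urysohn's lemma: raise `g` by a multiple of a function that vanishes on `closure W` and
is `1` off `U ⊇ closure W`. -/
theorem exists_coverFunction_eqOn [NormalSpace X] {𝒰 𝒲 : Set (Set X)}
    (hopen : ∀ U ∈ 𝒰, IsOpen U) (hshrink : ShrinksInto 𝒲 𝒰) {W : Set X} (hW : W ∈ 𝒲)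
    {g : X → ℝ} (hg : g ∈ Cb X) :
    ∃ g' ∈ coverFunctions 𝒰, g ≤ g' ∧ g' - g ∈ Cb X ∧ EqOn g' g W := by
  obtain ⟨U, hU, hWU⟩ := hshrink W hW
  obtain ⟨g, rfl⟩ := mem_Cb_iff.1 hg
  obtain ⟨b, hb0, hb1, hb01⟩ := exists_bounded_zero_one_of_closed isClosed_closure
    (hopen U hU).isClosed_compl (disjoint_compl_right_iff_subset.2 hWU)
  have hc : 0 ≤ 1 + ‖g‖ := by positivity
  refine ⟨⇑(g + (1 + ‖g‖) • b), ⟨coe_mem_Cb _, U, hU, fun x hx => ?_⟩, fun x => ?_,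
    by simpa using coe_mem_Cb ((1 + ‖g‖) • b), fun x hx => ?_⟩
  · have hgx : -‖g‖ ≤ g x := neg_le_of_abs_le (Real.norm_eq_abs _ ▸ g.norm_coe_le_norm x)
    have : 1 ≤ g x + (1 + ‖g‖) * b x := by rw [hb1 hx, Pi.one_apply]; linarith
    simpa using this.trans (le_abs_self _)
  · simpa using mul_nonneg hc (hb01 x).1
  · simp [hb0 (subset_closure hx)]

theorem coverFunctions_mem_Pfam [NormalSpace X] {𝒰 𝒲 : Set (Set X)}
    (hopen : ∀ U ∈ 𝒰, IsOpen U) (h𝒲 : IsCover 𝒲) (hshrink : ShrinksInto 𝒲 𝒰) :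
    coverFunctions 𝒰 ∈ Pfam (Cb X) := by
  refine ⟨fun g hg => hg.1, fun x => ?_⟩
  convert dense_univ
  refine eq_univ_of_forall fun r => ?_
  obtain ⟨W, hW, hxW⟩ := h𝒲 x
  obtain ⟨g, hg, -, -, hgr⟩ := exists_coverFunction_eqOn hopen hshrink hW (const_mem_Cb r)
  exact ⟨g, hg, hgr hxW⟩

theorem coverFunctions_upperDenseIn [NormalSpace X] {𝒰 𝒲 : Set (Set X)}
    (hopen : ∀ U ∈ 𝒰, IsOpen U) (h𝒲 : kindSets .omega 𝒲) (hshrink : ShrinksInto 𝒲 𝒰) :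
    UpperDenseIn (coverFunctions 𝒰) (Cb X) := by
  refine ⟨fun g hg => hg.1, fun f hf g ⟨hg, hfg⟩ => ?_⟩
  refine mem_closure_of_forall_finite_eqOn fun I hI => ?_
  obtain ⟨W, hW, hIW⟩ := h𝒲.2.2 I hI
  obtain ⟨g', hg', hgg', -, hEq⟩ := exists_coverFunction_eqOn hopen hshrink hW hg
  exact ⟨g', ⟨hg', hfg.trans hgg', sub_mem_Cb hg'.1 hf⟩, hEq.mono hIW⟩

theorem coverFunctions_upperSeqDenseIn [NormalSpace X] {𝒰 𝒲 : Set (Set X)}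
    (hopen : ∀ U ∈ 𝒰, IsOpen U) (h𝒲 : kindSets .gamma 𝒲) (hshrink : ShrinksInto 𝒲 𝒰) :
    UpperSeqDenseIn (coverFunctions 𝒰) (Cb X) := by
  obtain ⟨-, hinf, hcof⟩ := h𝒲
  set e := hinf.natEmbedding
  refine ⟨fun g hg => hg.1, fun f hf => ?_⟩
  choose u hu hfu hCb hEq using fun k => exists_coverFunction_eqOn hopen hshrink (e k).2 hf
  refine ⟨u, fun k => ⟨hu k, hfu k, hCb k⟩, tendsto_pi_nhds.2 fun x => ?_⟩
  have hmem : ∀ᶠ k in cofinite, x ∈ (e k : Set X) :=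
    eventually_cofinite.2 (((hcof x).preimage (Subtype.val_injective.comp e.injective).injOn).subset
      fun k hk => ⟨(e k).2, hk⟩)
  rw [Nat.cofinite_eq_atTop] at hmem
  exact tendsto_const_nhds.congr' (hmem.mono fun k hk => (hEq k hk).symm)

theorem coverFunctions_mem_upTilde [NormalSpace X] {Φ : CoverKind} {𝒰 : Set (Set X)}
    (h𝒰 : 𝒰 ∈ ShFam X Φ) : coverFunctions 𝒰 ∈ upTilde Φ (Cb X) := by
  obtain ⟨⟨hopen, -⟩, 𝒲, ⟨-, h𝒲⟩, hshrink⟩ := h𝒰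
  cases Φ with
  | o => exact coverFunctions_mem_Pfam hopen h𝒲 hshrink
  | omega => exact coverFunctions_upperDenseIn hopen h𝒲 hshrink
  | gamma => exact coverFunctions_upperSeqDenseIn hopen h𝒲 hshrink

theorem S1_ShFam_of_S1_propO [NormalSpace X] {Φ : CoverKind}
    (h : S1 (upTilde Φ (Cb X)) {F | PropO 0 F}) : S1 (ShFam X Φ) (OpenKindCovers X .o) := by
  intro 𝒰 h𝒰
  obtain ⟨f, hf, hf0⟩ := h _ fun n => coverFunctions_mem_upTilde (h𝒰 n)
  choose U hU hUf using fun n => (hf n).2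
  refine ⟨U, hU, forall_mem_range.2 fun n => (h𝒰 n).1.1 _ (hU n), fun x => ?_⟩
  obtain ⟨_, ⟨n, rfl⟩, hn⟩ := propO_iff.1 hf0 x 1 one_pos
  exact ⟨U n, mem_range_self n, by_contra fun hx => (hUf n x hx).not_gt (by simpa using hn)⟩

end Topology

theorem statement18_general {X : Type*} [TopologicalSpace X] [NormalSpace X]
    [Infinite X] (Φ : CoverKind) :
    List.TFAE [
      S1 (upTilde Φ (Cb X)) (Pfam (Cb X)),
      S1 (ShFam X Φ) (OpenKindCovers X CoverKind.o),
      S1 (PhiH Φ (0 : X → ℝ) (Cb X)) (PhiH CoverKind.o (0 : X → ℝ) (Cb X)),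
      S1 (upTilde Φ (Cb X)) {F | PropO (0 : X → ℝ) F}] := by
  tfae_have 1 → 4 := fun h => h.mono fun F hF => hF.2.propO 0
  tfae_have 4 → 2 := S1_ShFam_of_S1_propO
  tfae_have 2 → 3 := S1_PhiH_of_S1_ShFam
  tfae_have 3 → 1 := S1_Pfam_of_S1_PhiH
  tfae_finish

/-- For Φ ∈ {𝒪, Γ} (or Φ = Ω provided X has property (ε)) and X normal,
TFAE:
(a) C*_p(X) satisfies S₁(Φ̃↑, 𝒫);
(b) X possesses the covering property S₁(Φ^sh,𝒪);
(c) C*_p(X) satisfies S₁(Φ_0̄,𝒪_0̄);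
(d) C*_p(X) satisfies S₁(Φ̃↑,𝒪_0̄). -/
theorem statement18 {X : Type*} [TopologicalSpace X] [T2Space X] [NormalSpace X]
    [Infinite X] (Φ : CoverKind)
    (hΦ : Φ = CoverKind.o ∨ Φ = CoverKind.gamma ∨ (Φ = CoverKind.omega ∧ PropEps X)) :
    List.TFAE [
      S1 (upTilde Φ (Cb X)) (Pfam (Cb X)),
      S1 (ShFam X Φ) (OpenKindCovers X CoverKind.o),
      S1 (PhiH Φ (0 : X → ℝ) (Cb X)) (PhiH CoverKind.o (0 : X → ℝ) (Cb X)),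
      S1 (upTilde Φ (Cb X)) {F | PropO (0 : X → ℝ) F}] :=
  statement18_general Φ

end Selectors
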